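/- arXiv:1001.3308 — 4 statements merged into one kernel-verified Lean document; each statement's English description precedes it below -/
import Mathlib

section
/- For any σ > 0, ω > 0, d ∈ ℝ and w ∈ {−1, 1}: (1/(2πi)) ∫_{Im ξ = −wω} exp(i ξ d − σ² ξ²/2) · ξ^{−1} dξ = w · Φ(w d / σ). -/
/-!
Since `Im ξ < 0` on the contour, `ξ⁻¹ = i ∫₀^∞ e^{-iξt} dt`. Inserting this and exchanging the
integrals (the integrand decays like `e^{-σ²u²/2 - ωt}`), the inner integral in `u` is the Fourier
transform of a Gaussian along a shifted line, `√(2π)/σ · e^{-(d-t)²/(2σ²)}`, whose integral over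
`t > 0` is `2π Φ(d/σ)`. The case `w = -1` reduces to `w = 1` by the substitution `u ↦ -u`.
-/

open MeasureTheory Real Complex

/-- The standard normal cumulative distribution function. -/
noncomputable def stdNormalCDF (x : ℝ) : ℝ :=
  ∫ t in Set.Iic x, (Real.sqrt (2 * Real.pi))⁻¹ * Real.exp (-t ^ 2 / 2)

open Set

theorem inv_eq_I_mul_integral_Ioi_cexp {ξ : ℂ} (hξ : ξ.im < 0) :
    ξ⁻¹ = I * ∫ t in Ioi (0 : ℝ), cexp (-I * ξ * t) := by
  have hre : (-I * ξ).re < 0 := by simpa using hξ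
  rw [integral_exp_mul_complex_Ioi hre]
  field_simp
  simp

theorem integral_Ioi_zero_comp_sub_left {E : Type*} [NormedAddCommGroup E] [NormedSpace ℝ E]
    (f : ℝ → E) (c : ℝ) : ∫ t in Ioi (0 : ℝ), f (c - t) = ∫ x in Iic c, f x := by
  have hsub := (Measure.measurePreserving_sub_left volume c).setIntegral_preimage_emb
    (Homeomorph.subLeft c).measurableEmbedding f (Iic c)
  rw [← hsub, ← integral_Ici_eq_integral_Ioi]
  congr 2
  ext t; simp

theorem integral_Ioi_exp_neg_sq_sub_eq_stdNormalCDF {σ : ℝ} (hσ : 0 < σ) (d : ℝ) :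
    ∫ t in Ioi (0 : ℝ), rexp (-(d - t) ^ 2 / (2 * σ ^ 2))
      = σ * √(2 * π) * stdNormalCDF (d / σ) := by
  set g : ℝ → ℝ := fun y => rexp (-y ^ 2 / 2)
  have hscale : ∀ t, rexp (-(d - t) ^ 2 / (2 * σ ^ 2)) = g (d / σ - σ⁻¹ * t) := by
    intro t; simp only [g]; congr 1; field_simp
  have hcdf : stdNormalCDF (d / σ) = (√(2 * π))⁻¹ * ∫ x in Iic (d / σ), g x :=
    integral_const_mul _ _
  simp_rw [hscale]
  rw [integral_comp_mul_left_Ioi (fun t => g (d / σ - t)) 0 (inv_pos.mpr hσ), mul_zero,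
    integral_Ioi_zero_comp_sub_left, hcdf, smul_eq_mul, inv_inv]
  field_simp

theorem integral_cexp_fourier_gaussian_add_const {σ : ℝ} (hσ : 0 < σ) (s : ℝ) (c : ℂ) :
    ∫ u : ℝ, cexp (I * (u + c) * s - σ ^ 2 * (u + c) ^ 2 / 2)
      = ((√(2 * π) / σ * rexp (-s ^ 2 / (2 * σ ^ 2)) : ℝ) : ℂ) := by
  have hσ' : (σ : ℂ) ≠ 0 := ofReal_ne_zero.mpr hσ.ne'
  set b : ℂ := -(σ : ℂ) ^ 2 / 2 with hb_def
  have hb : b.re < 0 := by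
    rw [hb_def, ← ofReal_pow, ← ofReal_neg, ← ofReal_ofNat, ← ofReal_div, ofReal_re]
    have := pow_pos hσ 2
    linarith
  have hquad : ∀ u : ℝ, I * (u + c) * s - σ ^ 2 * (u + c) ^ 2 / 2
      = b * u ^ 2 + (I * s - σ ^ 2 * c) * u + (I * c * s - σ ^ 2 * c ^ 2 / 2) := by
    intro u; ring
  have hexp : I * c * s - σ ^ 2 * c ^ 2 / 2 - (I * s - σ ^ 2 * c) ^ 2 / (4 * b)
      = ((-s ^ 2 / (2 * σ ^ 2) : ℝ) : ℂ) := by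
    rw [hb_def]
    push_cast
    field_simp
    linear_combination 4 * (s : ℂ) ^ 2 * I_sq
  have hsqrt : ((π : ℂ) / -b) ^ (1 / 2 : ℂ) = ((√(2 * π) / σ : ℝ) : ℂ) := by
    have hsq : (π : ℂ) / -b = ((2 * π / σ ^ 2 : ℝ) : ℂ) := by
      rw [hb_def]; push_cast; field_simp
    rw [hsq, ← ofReal_one, ← ofReal_ofNat, ← ofReal_div, ← ofReal_cpow (by positivity),
      ← sqrt_eq_rpow, sqrt_div' _ (sq_nonneg σ), sqrt_sq hσ.le]
  simp_rw [hquad]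
  rw [integral_cexp_quadratic hb, hexp, hsqrt, ← ofReal_exp, ← ofReal_mul]

theorem norm_cexp_fourier_gaussian_laplace (σ ω d u t : ℝ) :
    ‖cexp (I * (u - ω * I) * (d - t) - σ ^ 2 * (u - ω * I) ^ 2 / 2)‖
      = rexp (ω * d + σ ^ 2 * ω ^ 2 / 2) * (rexp (-(σ ^ 2 / 2) * u ^ 2) * rexp (-ω * t)) := by
  rw [norm_exp, ← Real.exp_add, ← Real.exp_add]
  congr 1
  simp only [pow_two, sub_re, mul_re, sub_im, mul_im, I_re, I_im, ofReal_re, ofReal_im,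
    div_ofNat_re]
  ring

theorem integrable_cexp_fourier_gaussian_laplace {σ ω : ℝ} (hσ : 0 < σ) (hω : 0 < ω) (d : ℝ) :
    Integrable (fun p : ℝ × ℝ =>
        cexp (I * (p.1 - ω * I) * (d - p.2) - σ ^ 2 * (p.1 - ω * I) ^ 2 / 2))
      (volume.prod (volume.restrict (Ioi 0))) := by
  have hσ2 : 0 < σ ^ 2 / 2 := by positivity
  refine Integrable.mono' (((integrable_exp_neg_mul_sq hσ2).mul_prod
    (exp_neg_integrableOn_Ioi 0 hω)).const_mul (rexp (ω * d + σ ^ 2 * ω ^ 2 / 2)))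
    (by fun_prop) (ae_of_all _ fun p => ?_)
  rw [norm_cexp_fourier_gaussian_laplace]

theorem integral_cexp_gaussian_div_below_real_axis {σ ω : ℝ} (hσ : 0 < σ) (hω : 0 < ω) (d : ℝ) :
    ∫ u : ℝ, cexp (I * (u - ω * I) * d - σ ^ 2 * (u - ω * I) ^ 2 / 2) / (u - ω * I)
      = 2 * π * I * stdNormalCDF (d / σ) := by
  set F : ℝ → ℝ → ℂ := fun u t =>
    cexp (I * (u - ω * I) * (d - t) - σ ^ 2 * (u - ω * I) ^ 2 / 2)
  have hlaplace : ∀ u : ℝ,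
      cexp (I * (u - ω * I) * d - σ ^ 2 * (u - ω * I) ^ 2 / 2) / (u - ω * I)
        = I * ∫ t in Ioi (0 : ℝ), F u t := by
    intro u
    rw [div_eq_mul_inv, inv_eq_I_mul_integral_Ioi_cexp (by simpa using hω), mul_left_comm,
      ← integral_const_mul]
    congr 2 with t
    rw [← Complex.exp_add]
    congr 1
    ring
  have hgauss : ∀ t : ℝ, ∫ u : ℝ, F u t
      = ((√(2 * π) / σ * rexp (-(d - t) ^ 2 / (2 * σ ^ 2)) : ℝ) : ℂ) := by
    intro t
    rw [← integral_cexp_fourier_gaussian_add_const hσ (d - t) (-ω * I)]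
    congr 1 with u
    simp only [F]
    congr 1
    push_cast
    ring
  simp_rw [hlaplace]
  rw [integral_const_mul,
    integral_integral_swap (integrable_cexp_fourier_gaussian_laplace hσ hω d)]
  simp_rw [hgauss]
  rw [integral_complex_ofReal, integral_const_mul, integral_Ioi_exp_neg_sq_sub_eq_stdNormalCDF hσ]
  have hconst : √(2 * π) / σ * (σ * √(2 * π) * stdNormalCDF (d / σ))
      = 2 * π * stdNormalCDF (d / σ) := by
    rw [div_mul_eq_mul_div, div_eq_iff hσ.ne']
    linear_combination σ * stdNormalCDF (d / σ) * mul_self_sqrt (by positivity : 0 ≤ 2 * π)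
  rw [hconst]
  push_cast
  ring

theorem integral_cexp_gaussian_div_reflect (σ d : ℝ) (c : ℂ) :
    ∫ u : ℝ, cexp (I * (u + c) * d - σ ^ 2 * (u + c) ^ 2 / 2) / (u + c)
      = -∫ u : ℝ, cexp (I * (u - c) * ↑(-d) - σ ^ 2 * (u - c) ^ 2 / 2) / (u - c) := by
  rw [← integral_neg, ← integral_neg_eq_self]
  congr 1 with u
  rw [show ((-u : ℝ) : ℂ) + c = -(u - c) by push_cast; ring, div_neg, neg_sq]
  congr 3
  push_cast
  ring

/-- For any σ > 0, ω > 0, d ∈ ℝ and w ∈ {−1, 1}: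
(1/(2πi)) ∫_{Im ξ = −wω} exp(i ξ d − σ² ξ²/2) · ξ⁻¹ dξ = w · Φ(w d / σ). -/
theorem stmt1 (σ ω d w : ℝ) (hσ : 0 < σ) (hω : 0 < ω) (hw : w = 1 ∨ w = -1) :
    (1 / (2 * Real.pi * Complex.I)) *
      ∫ u : ℝ, Complex.exp (Complex.I * (u - (w * ω) * Complex.I) * d
          - σ ^ 2 * (u - (w * ω) * Complex.I) ^ 2 / 2) / (u - (w * ω) * Complex.I)
      = (w : ℂ) * stdNormalCDF (w * d / σ) := by
  have h2πI : 2 * (π : ℂ) * I ≠ 0 := by simp [pi_ne_zero]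
  rcases hw with rfl | rfl
  · simp only [ofReal_one, one_mul]
    rw [integral_cexp_gaussian_div_below_real_axis hσ hω d]
    field_simp
  · simp only [ofReal_neg, ofReal_one, neg_mul, one_mul, sub_neg_eq_add]
    rw [integral_cexp_gaussian_div_reflect,
      integral_cexp_gaussian_div_below_real_axis hσ hω (-d), neg_div]
    field_simp
end

section
/- (Contour shift across the pole at the origin.) Let ω₁, ω₂ > 0 and let f be holomorphic on an open set containing the closed strip {ζ ∈ ℂ : −ω₁ ≤ Im ζ ≤ ω₂}. Suppose there is h ∈ L¹(ℝ) with h(u) → 0 as |u| → ∞ such that |f(u + iv)| ≤ h(u) for all u ∈ ℝ and all v ∈ [−ω₁, ω₂]. Then ∫_{Im ξ = −ω₁} f(ξ)/ξ dξ = ∫_{Im ξ = ω₂} f(ξ)/ξ dξ + 2πi f(0). -/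
open MeasureTheory Real Complex Filter Set Topology

/-!
Write `f z / z = g z + f 0 / z` with `g = dslope f 0`, which is holomorphic on the strip.
Cauchy's theorem on the rectangles `[-R, R] × [-ω₁, ω₂]` shows that `g` has the same integral
over both horizontal lines, because `g = (f - f 0) / z` tends to zero uniformly on the vertical
sides. The remaining term is `f 0 * ∫ ((u - ω₁ I)⁻¹ - (u + ω₂ I)⁻¹) du`; symmetrising under
`u ↦ -u` turns this integrand into `2 I (ω₁ / (ω₁² + u²) + ω₂ / (ω₂² + u²))`, whose integral is
`2π I` by the Poisson kernel integral `∫ c / (c² + u²) du = π`.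
-/

theorem inv_sq_add_sq_eq {c : ℝ} (hc : c ≠ 0) (u : ℝ) :
    (c ^ 2 + u ^ 2)⁻¹ = (c ^ 2)⁻¹ * (1 + (u / c) ^ 2)⁻¹ := by
  field_simp

theorem integrable_inv_sq_add_sq {c : ℝ} (hc : c ≠ 0) :
    Integrable fun u : ℝ => (c ^ 2 + u ^ 2)⁻¹ := by
  simp_rw [inv_sq_add_sq_eq hc]
  exact (integrable_inv_one_add_sq.comp_div hc).const_mul _

theorem integral_univ_inv_sq_add_sq {c : ℝ} (hc : 0 < c) :
    ∫ u : ℝ, (c ^ 2 + u ^ 2)⁻¹ = π / c := by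
  simp_rw [inv_sq_add_sq_eq hc.ne']
  rw [integral_const_mul, Measure.integral_comp_div (fun x : ℝ => (1 + x ^ 2)⁻¹),
    integral_univ_inv_one_add_sq, abs_of_pos hc, smul_eq_mul]
  field_simp

theorem ofReal_add_ofReal_mul_I_ne_zero (u : ℝ) {v : ℝ} (hv : v ≠ 0) : (u : ℂ) + v * I ≠ 0 :=
  fun h => hv (by simpa using congrArg im h)

theorem ofReal_sub_ofReal_mul_I_ne_zero (u : ℝ) {v : ℝ} (hv : v ≠ 0) : (u : ℂ) - v * I ≠ 0 :=
  fun h => hv (by simpa using congrArg im h)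

theorem inv_sub_mul_I_sub_inv_add_mul_I (u c : ℝ) :
    ((u : ℂ) - c * I)⁻¹ - ((u : ℂ) + c * I)⁻¹ = ((2 * c * (c ^ 2 + u ^ 2)⁻¹ : ℝ) : ℂ) * I := by
  rw [inv_def, inv_def]
  simp only [map_sub, map_add, conj_ofReal, map_mul, conj_I, normSq_apply, mul_neg, sub_neg_eq_add,
    sub_re, ofReal_re, mul_re, I_re, mul_zero, ofReal_im, I_im, mul_one, sub_self, sub_zero, sub_im,
    mul_im, add_zero, zero_sub, neg_mul, neg_neg, ofReal_inv, ofReal_add, ofReal_mul, add_re, add_im,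
    zero_add, ofReal_ofNat, ofReal_pow]
  ring

section PoleTerm

variable {a b : ℝ}

theorem integrable_inv_sub_mul_I_sub_inv_add_mul_I (ha : 0 < a) (hb : 0 < b) :
    Integrable fun u : ℝ => ((u : ℂ) - a * I)⁻¹ - ((u : ℂ) + b * I)⁻¹ := by
  have hm : 0 < min a b := lt_min ha hb
  refine ((integrable_inv_sq_add_sq hm.ne').const_mul (a + b)).mono' (by fun_prop) ?_
  refine Eventually.of_forall fun u => ?_
  have hnum : ((u : ℂ) + b * I) - ((u : ℂ) - a * I) = ((a + b : ℝ) : ℂ) * I := by push_cast; ring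
  have hden : min a b ^ 2 + u ^ 2 ≤ ‖((u : ℂ) - a * I) * ((u : ℂ) + b * I)‖ := by
    refine le_trans ?_ (re_le_norm _)
    have : min a b ^ 2 ≤ a * b := by nlinarith [min_le_left a b, min_le_right a b]
    simp only [mul_re, sub_re, ofReal_re, ofReal_im, add_re, sub_im, mul_im, add_im, I_re, I_im]
    nlinarith
  rw [inv_sub_inv (ofReal_sub_ofReal_mul_I_ne_zero u ha.ne')
    (ofReal_add_ofReal_mul_I_ne_zero u hb.ne'), hnum, norm_div, norm_mul, norm_I, mul_one,
    norm_real, Real.norm_of_nonneg (by positivity), ← div_eq_mul_inv]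
  gcongr

theorem integral_inv_sub_mul_I_sub_inv_add_mul_I (ha : 0 < a) (hb : 0 < b) :
    ∫ u : ℝ, (((u : ℂ) - a * I)⁻¹ - ((u : ℂ) + b * I)⁻¹) = 2 * π * I := by
  set k : ℝ → ℂ := fun u => ((u : ℂ) - a * I)⁻¹ - ((u : ℂ) + b * I)⁻¹
  have hk := integrable_inv_sub_mul_I_sub_inv_add_mul_I ha hb
  have hsymm : ∀ u, k u + k (-u) =
      ((2 * a * (a ^ 2 + u ^ 2)⁻¹ + 2 * b * (b ^ 2 + u ^ 2)⁻¹ : ℝ) : ℂ) * I := by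
    intro u
    simp only [k, ofReal_neg]
    rw [show -(u : ℂ) - a * I = -(u + a * I) by ring, show -(u : ℂ) + b * I = -(u - b * I) by ring,
      inv_neg, inv_neg]
    have ha' := inv_sub_mul_I_sub_inv_add_mul_I u a
    have hb' := inv_sub_mul_I_sub_inv_add_mul_I u b
    push_cast at ha' hb' ⊢
    linear_combination ha' + hb'
  have hsum : ∫ u : ℝ, (2 * a * (a ^ 2 + u ^ 2)⁻¹ + 2 * b * (b ^ 2 + u ^ 2)⁻¹) = 4 * π := by
    rw [integral_add ((integrable_inv_sq_add_sq ha.ne').const_mul _)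
      ((integrable_inv_sq_add_sq hb.ne').const_mul _), integral_const_mul, integral_const_mul,
      integral_univ_inv_sq_add_sq ha, integral_univ_inv_sq_add_sq hb]
    field_simp
    ring
  have htwice : 2 * ∫ u, k u = 4 * π * I :=
    calc 2 * ∫ u, k u = (∫ u, k u) + ∫ u, k (-u) := by rw [integral_neg_eq_self]; ring
      _ = ∫ u, (k u + k (-u)) := (integral_add hk hk.comp_neg).symm
      _ = 4 * π * I := by
        simp_rw [hsymm]
        rw [integral_mul_const, integral_complex_ofReal, hsum]
        push_cast
        ring
  linear_combination htwice / 2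

end PoleTerm

section HorizontalStrip

variable {E : Type*} [NormedAddCommGroup E] [NormedSpace ℂ E] {g : ℂ → E} {a b : ℝ}
  {B : ℝ → ℝ}

theorem tendsto_integral_vertical_cocompact (hab : a ≤ b) (hB : Tendsto B (cocompact ℝ) (𝓝 0))
    (hgB : ∀ᶠ x : ℝ in cocompact ℝ, ∀ y ∈ Icc a b, ‖g (x + y * I)‖ ≤ B x) :
    Tendsto (fun x : ℝ => ∫ y in a..b, g (x + y * I)) (cocompact ℝ) (𝓝 0) := by
  have hlim : Tendsto (fun x => B x * (b - a)) (cocompact ℝ) (𝓝 0) := by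
    simpa using hB.mul_const (b - a)
  refine squeeze_zero_norm' ?_ hlim
  filter_upwards [hgB] with x hx
  have := intervalIntegral.norm_integral_le_of_norm_le_const fun y hy =>
    hx y (Ioc_subset_Icc_self (by rwa [uIoc_of_le hab] at hy))
  rwa [abs_of_nonneg (sub_nonneg.2 hab)] at this

theorem intervalIntegral_horizontal_sub_eq_vertical (hab : a ≤ b)
    (hg : DifferentiableOn ℂ g (im ⁻¹' Icc a b)) (R : ℝ) :
    ∫ x in -R..R, (g (x + a * I) - g (x + b * I)) =
      I • (∫ y in a..b, g (-R + y * I)) - I • ∫ y in a..b, g (R + y * I) := by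
  have hcont : ∀ v ∈ Icc a b, Continuous fun x : ℝ => g (x + v * I) := fun v hv =>
    hg.continuousOn.comp_continuous (by fun_prop) fun x => by simpa using hv
  have hrect := integral_boundary_rect_eq_zero_of_differentiableOn g
    ((-R : ℝ) + a * I) (R + b * I) (hg.mono fun z hz => by
      simpa [mem_reProdIm, uIcc_of_le hab] using hz.2)
  simp only [ofReal_neg, add_im, neg_im, ofReal_im, neg_zero, mul_im, ofReal_re, I_im, mul_one,
    I_re, mul_zero, add_zero, zero_add, add_re, neg_re, mul_re, sub_self] at hrect
  rw [intervalIntegral.integral_sub ((hcont a ⟨le_rfl, hab⟩).intervalIntegrable _ _)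
    ((hcont b ⟨hab, le_rfl⟩).intervalIntegrable _ _)]
  linear_combination (norm := module) hrect

theorem integral_horizontal_sub_eq_zero (hab : a ≤ b)
    (hg : DifferentiableOn ℂ g (im ⁻¹' Icc a b)) (hB : Tendsto B (cocompact ℝ) (𝓝 0))
    (hgB : ∀ᶠ x : ℝ in cocompact ℝ, ∀ y ∈ Icc a b, ‖g (x + y * I)‖ ≤ B x)
    (hint : Integrable fun x : ℝ => g (x + a * I) - g (x + b * I)) :
    ∫ x : ℝ, (g (x + a * I) - g (x + b * I)) = 0 := by
  have hV := tendsto_integral_vertical_cocompact hab hB hgB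
  have hleft := (hV.comp (tendsto_neg_atTop_atBot.mono_right atBot_le_cocompact)).const_smul I
  have hright := (hV.comp (tendsto_id.mono_right atTop_le_cocompact)).const_smul I
  refine tendsto_nhds_unique
    (intervalIntegral_tendsto_integral hint tendsto_neg_atTop_atBot tendsto_id) ?_
  simpa [intervalIntegral_horizontal_sub_eq_vertical hab hg] using hleft.sub hright

theorem eventually_norm_dslope_zero_le {F : ℂ → E} {h : ℝ → ℝ}
    (hFh : ∀ u v : ℝ, a ≤ v → v ≤ b → ‖F (u + v * I)‖ ≤ h u) :
    ∀ᶠ x : ℝ in cocompact ℝ, ∀ y ∈ Icc a b,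
      ‖dslope F 0 (x + y * I)‖ ≤ (h x + ‖F 0‖) * ‖x‖⁻¹ := by
  filter_upwards [tendsto_norm_cocompact_atTop.eventually_gt_atTop 0] with x hx y hy
  have hz : ‖x‖ ≤ ‖(x : ℂ) + y * I‖ := by simpa using abs_re_le_norm ((x : ℂ) + y * I)
  have hnum : ‖F (x + y * I) - F 0‖ ≤ h x + ‖F 0‖ :=
    (norm_sub_le _ _).trans (by linarith [hFh x y hy.1 hy.2])
  rw [dslope_of_ne F (norm_pos_iff.1 (hx.trans_le hz)), slope_def_module, sub_zero, norm_smul,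
    norm_inv, mul_comm]
  exact mul_le_mul hnum (inv_anti₀ hx hz) (by positivity) ((norm_nonneg _).trans hnum)

end HorizontalStrip

theorem integrable_div_horizontal_of_norm_le {F : ℂ → ℂ} {h : ℝ → ℝ} {v : ℝ} (hv : v ≠ 0)
    (hF : Continuous fun u : ℝ => F (u + v * I)) (hh : Integrable h)
    (hFh : ∀ u : ℝ, ‖F (u + v * I)‖ ≤ h u) :
    Integrable fun u : ℝ => F (u + v * I) / (u + v * I) := by
  refine (hh.div_const |v|).mono' ?_ (Eventually.of_forall fun u => ?_)
  · exact (hF.div (by fun_prop) (ofReal_add_ofReal_mul_I_ne_zero · hv)).aestronglyMeasurable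
  · have hz : |v| ≤ ‖(u : ℂ) + v * I‖ := by simpa using abs_im_le_norm ((u : ℂ) + v * I)
    rw [norm_div]
    exact div_le_div₀ ((norm_nonneg _).trans (hFh u)) (hFh u) (abs_pos.2 hv) hz

theorem dslope_zero_eq_div_sub {F : ℂ → ℂ} {z : ℂ} (hz : z ≠ 0) :
    dslope F 0 z = F z / z - F 0 * z⁻¹ := by
  rw [dslope_of_ne F hz, slope_def_field, sub_zero]
  ring

/-- Contour shift across the pole at the origin: for `f` holomorphic on a neighbourhood of
the closed strip `−ω₁ ≤ Im ζ ≤ ω₂` and dominated by an integrable function vanishing at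
infinity, `∫_{Im ξ = −ω₁} f(ξ)/ξ dξ = ∫_{Im ξ = ω₂} f(ξ)/ξ dξ + 2πi f(0)`. -/
theorem stmt8 (ω₁ ω₂ : ℝ) (hω₁ : 0 < ω₁) (hω₂ : 0 < ω₂)
    (f : ℂ → ℂ) (U : Set ℂ) (hU : IsOpen U)
    (hUstrip : {ζ : ℂ | -ω₁ ≤ ζ.im ∧ ζ.im ≤ ω₂} ⊆ U)
    (hf : DifferentiableOn ℂ f U)
    (h : ℝ → ℝ) (hint : Integrable h)
    (hvanish : Tendsto h (cocompact ℝ) (nhds 0))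
    (hbound : ∀ u v : ℝ, -ω₁ ≤ v → v ≤ ω₂ →
      ‖f ((u : ℂ) + (v : ℂ) * Complex.I)‖ ≤ h u) :
    (∫ u : ℝ, f ((u : ℂ) - (ω₁ : ℂ) * Complex.I) / ((u : ℂ) - (ω₁ : ℂ) * Complex.I))
      = (∫ u : ℝ, f ((u : ℂ) + (ω₂ : ℂ) * Complex.I) / ((u : ℂ) + (ω₂ : ℂ) * Complex.I))
        + 2 * Real.pi * Complex.I * f 0 := by
  have hlow : ∀ u : ℝ, (u : ℂ) + ((-ω₁ : ℝ) : ℂ) * I = u - ω₁ * I := fun u => by push_cast; ring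
  have hline : ∀ v, -ω₁ ≤ v → v ≤ ω₂ → Continuous fun u : ℝ => f (u + v * I) := fun v h₁ h₂ =>
    hf.continuousOn.comp_continuous (by fun_prop) fun u => hUstrip (by simp [h₁, h₂])
  have hA := integrable_div_horizontal_of_norm_le (by linarith) (hline (-ω₁) le_rfl (by linarith))
    hint (hbound · (-ω₁) le_rfl (by linarith))
  simp only [hlow] at hA
  have hB := integrable_div_horizontal_of_norm_le hω₂.ne' (hline ω₂ (by linarith) le_rfl) hint
    (hbound · ω₂ (by linarith) le_rfl)
  have hK := (integrable_inv_sub_mul_I_sub_inv_add_mul_I hω₁ hω₂).const_mul (f 0)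
  have hg : DifferentiableOn ℂ (dslope f 0) (im ⁻¹' Icc (-ω₁) ω₂) :=
    ((differentiableOn_dslope (hU.mem_nhds (hUstrip (by simp [hω₁.le, hω₂.le])))).2 hf).mono
      hUstrip
  have hsplit : ∀ u : ℝ, dslope f 0 (u + ((-ω₁ : ℝ) : ℂ) * I) - dslope f 0 (u + ω₂ * I) =
      (f (u - ω₁ * I) / (u - ω₁ * I) - f (u + ω₂ * I) / (u + ω₂ * I))
        - f 0 * ((u - ω₁ * I)⁻¹ - (u + ω₂ * I)⁻¹) := fun u => by
    rw [hlow, dslope_zero_eq_div_sub (ofReal_sub_ofReal_mul_I_ne_zero u hω₁.ne'),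
      dslope_zero_eq_div_sub (ofReal_add_ofReal_mul_I_ne_zero u hω₂.ne')]
    ring
  have hdecay : Tendsto (fun x : ℝ => (h x + ‖f 0‖) * ‖x‖⁻¹) (cocompact ℝ) (𝓝 0) := by
    simpa using (hvanish.add_const ‖f 0‖).mul
      (tendsto_inv_atTop_zero.comp tendsto_norm_cocompact_atTop)
  have hshift := integral_horizontal_sub_eq_zero (by linarith) hg hdecay
    (eventually_norm_dslope_zero_le hbound) (by simpa only [hsplit] using (hA.sub' hB).sub' hK)
  simp only [hsplit] at hshift
  rw [integral_sub (hA.sub' hB) hK, integral_sub hA hB, integral_const_mul,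
    integral_inv_sub_mul_I_sub_inv_add_mul_I hω₁ hω₂] at hshift
  linear_combination hshift
end

section
/- (Gaussian reduction of the forward-start price.) Let σ > 0, r ∈ ℝ, τ > 0, S > 0, w ∈ {−1, 1} and ω₁, ω₂ > 0. Then (S/(2πi)) · ( ∫_{Im ξ = −wω₂} e^{i(r + σ²/2)τξ − τσ²ξ²/2}/ξ dξ − e^{−rτ} ∫_{Im ξ = −wω₁} e^{i(r − σ²/2)τξ − τσ²ξ²/2}/ξ dξ ) = w S ( Φ(w(r/σ + σ/2)√τ) − e^{−rτ} Φ(w(r/σ − σ/2)√τ) ). -/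
open MeasureTheory Real Complex Set

lemma integral_Ioi_exp_neg_sq_sub (β : ℝ) :
    ∫ t in Ioi (0 : ℝ), Real.exp (-(β - t) ^ 2 / 2) = √(2 * π) * stdNormalCDF β := by
  have hpre : (fun t : ℝ => β - t) ⁻¹' Iio β = Ioi 0 := by ext t; simp
  rw [stdNormalCDF, integral_const_mul, mul_inv_cancel_left₀ (by positivity),
    integral_Iic_eq_integral_Iio, ← hpre, (Measure.measurePreserving_sub_left volume β)
      |>.setIntegral_preimage_emb (Homeomorph.subLeft β).measurableEmbedding
      (fun x => Real.exp (-x ^ 2 / 2))]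

lemma inv_eq_I_mul_integral_Ioi {ξ : ℂ} (hξ : ξ.im < 0) :
    ξ⁻¹ = I * ∫ s in Ioi (0 : ℝ), cexp (-I * ξ * s) := by
  have hre : (-I * ξ).re < 0 := by simpa using hξ
  have hξ0 : ξ ≠ 0 := fun h => by simp [h] at hξ
  rw [integral_exp_mul_complex_Ioi hre]
  field_simp
  simp

lemma integral_cexp_mul_sub_sq_add {c : ℝ} (hc : 0 < c) (β d : ℂ) :
    ∫ u : ℝ, cexp (β * (u + d) - c * (u + d) ^ 2 / 2)
      = √(2 * π / c) * cexp (β ^ 2 / (2 * c)) := by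
  have hc' : (c : ℂ) ≠ 0 := by exact_mod_cast hc.ne'
  have hb : (-(c : ℂ) / 2).re < 0 := by simp; linarith
  have hquad : ∀ u : ℝ, β * (u + d) - c * (u + d) ^ 2 / 2
      = -(c : ℂ) / 2 * u ^ 2 + (β - c * d) * u + (β * d - c * d ^ 2 / 2) := fun u => by ring
  simp_rw [hquad, integral_cexp_quadratic hb]
  congr 1
  · rw [show (π : ℂ) / -(-(c : ℂ) / 2) = ((2 * π / c : ℝ) : ℂ) by push_cast; field_simp,
      Real.sqrt_eq_rpow, Complex.ofReal_cpow (by positivity)]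
    norm_num
  · congr 1
    field_simp
    ring

lemma integrable_cexp_mul_sub_sq_prod_Ioi {a c k : ℝ} (ha : 0 < a) (hc : 0 < c) (hk : 0 < k)
    (b : ℝ) :
    Integrable (fun p : ℝ × ℝ =>
        cexp (I * (b - k * p.2) * (p.1 - a * I) - c * (p.1 - a * I) ^ 2 / 2))
      (volume.prod (volume.restrict (Ioi 0))) := by
  have hbound : Integrable (fun p : ℝ × ℝ =>
      Real.exp (a * b + c * a ^ 2 / 2) * (Real.exp (-(c / 2) * p.1 ^ 2) * Real.exp (-(a * k) * p.2)))
      (volume.prod (volume.restrict (Ioi 0))) :=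
    ((integrable_exp_neg_mul_sq (by positivity)).mul_prod
      (exp_neg_integrableOn_Ioi 0 (by positivity))).const_mul _
  refine hbound.mono' (by fun_prop) (Filter.Eventually.of_forall fun p => le_of_eq ?_)
  rw [Complex.norm_exp, ← Real.exp_add, ← Real.exp_add]
  congr 1
  simp [Complex.mul_re, Complex.mul_im, sq]
  ring

noncomputable def gaussDivKernel (b c : ℝ) (ξ : ℂ) : ℂ := cexp (I * b * ξ - c * ξ ^ 2 / 2) / ξ

theorem integral_gaussDivKernel_sub_mul_I {a c : ℝ} (ha : 0 < a) (hc : 0 < c) (b : ℝ) :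
    ∫ u : ℝ, gaussDivKernel b c (u - a * I) = 2 * π * I * stdNormalCDF (b / √c) := by
  -- Scaling the Laplace variable by `√c` makes the final half-line integral a standard one.
  set k := √c with hk_def
  have hk : 0 < k := Real.sqrt_pos.mpr hc
  have hkc : k ^ 2 = c := Real.sq_sqrt hc.le
  set G : ℝ → ℝ → ℂ := fun u t =>
    cexp (I * (b - k * t) * (u - a * I) - c * (u - a * I) ^ 2 / 2) with hG
  have hk0 : (k : ℂ) ≠ 0 := by exact_mod_cast hk.ne'
  have hlaplace : ∀ u : ℝ, gaussDivKernel b c (u - a * I) = I * k * ∫ t in Ioi (0 : ℝ), G u t := by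
    intro u
    have him : ((k : ℂ) * (u - a * I)).im < 0 := by simp; positivity
    have hinv : ((u : ℂ) - a * I)⁻¹ = k * ((k : ℂ) * (u - a * I))⁻¹ := by
      rw [mul_inv, mul_inv_cancel_left₀ hk0]
    rw [gaussDivKernel, div_eq_mul_inv, hinv, inv_eq_I_mul_integral_Ioi him,
      ← integral_const_mul, ← integral_const_mul, ← integral_const_mul, ← integral_const_mul]
    refine integral_congr_ae (Filter.Eventually.of_forall fun t => ?_)
    simp only [hG]
    rw [show I * (b - k * t) * (u - a * I) - c * (u - a * I) ^ 2 / 2 =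
      (I * b * (u - a * I) - c * (u - a * I) ^ 2 / 2) + -I * (k * (u - a * I)) * t by ring,
      Complex.exp_add]
    ring
  have hgauss : ∀ t : ℝ, ∫ u : ℝ, G u t = √(2 * π / c) * Real.exp (-(b / k - t) ^ 2 / 2) := by
    intro t
    have hshift := integral_cexp_mul_sub_sq_add hc (I * (b - k * t)) (-(a * I))
    simp only [← sub_eq_add_neg] at hshift
    simp only [hG]
    rw [hshift, Complex.ofReal_exp]
    congr 2
    rw [← hkc]
    push_cast
    field_simp
    rw [I_sq]
    ring
  have hconst : k * √(2 * π / c) * √(2 * π) = 2 * π := by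
    rw [hk_def, ← Real.sqrt_mul hc.le, mul_div_cancel₀ _ hc.ne',
      Real.mul_self_sqrt (by positivity)]
  calc ∫ u : ℝ, gaussDivKernel b c (u - a * I)
      = I * k * ∫ u : ℝ, ∫ t in Ioi (0 : ℝ), G u t := by
        simp_rw [hlaplace]; exact integral_const_mul _ _
    _ = I * k * ∫ t in Ioi (0 : ℝ), ∫ u : ℝ, G u t := by
        rw [integral_integral_swap (integrable_cexp_mul_sub_sq_prod_Ioi ha hc hk b)]
    _ = I * k * √(2 * π / c) * ∫ t in Ioi (0 : ℝ), (Real.exp (-(b / k - t) ^ 2 / 2) : ℂ) := by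
        simp_rw [hgauss]; rw [integral_const_mul]; ring
    _ = I * ((k * √(2 * π / c) * √(2 * π) : ℝ) : ℂ) * stdNormalCDF (b / k) := by
        rw [integral_complex_ofReal, integral_Ioi_exp_neg_sq_sub]; push_cast; ring
    _ = 2 * π * I * stdNormalCDF (b / √c) := by
        rw [hconst]; push_cast; ring

lemma gaussDivKernel_neg (b c : ℝ) (ξ : ℂ) :
    gaussDivKernel b c (-ξ) = -gaussDivKernel (-b) c ξ := by
  simp only [gaussDivKernel, div_neg]
  push_cast
  ring_nf

theorem integral_gaussDivKernel_add_mul_I {a c : ℝ} (ha : 0 < a) (hc : 0 < c) (b : ℝ) :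
    ∫ u : ℝ, gaussDivKernel b c (u + a * I) = -(2 * π * I * stdNormalCDF (-b / √c)) := by
  have hreflect : ∀ u : ℝ, ((-u : ℝ) : ℂ) + a * I = -(u - a * I) := fun u => by push_cast; ring
  rw [← integral_neg_eq_self, ← integral_gaussDivKernel_sub_mul_I ha hc, ← integral_neg]
  simp_rw [hreflect, gaussDivKernel_neg]

theorem integral_gaussDivKernel_sub_sign_mul_I {w a c : ℝ} (hw : w = 1 ∨ w = -1) (ha : 0 < a)
    (hc : 0 < c) (b : ℝ) :
    ∫ u : ℝ, gaussDivKernel b c (u - (w * a) * I) = w * (2 * π * I * stdNormalCDF (w * b / √c)) := by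
  rcases hw with rfl | rfl
  · simpa using integral_gaussDivKernel_sub_mul_I ha hc b
  · simpa [neg_div] using integral_gaussDivKernel_add_mul_I ha hc b

theorem stmt12_general (σ r τ S w ω₁ ω₂ : ℝ) (hσ : 0 < σ) (hτ : 0 < τ)
    (hw : w = 1 ∨ w = -1) (hω₁ : 0 < ω₁) (hω₂ : 0 < ω₂) :
    ((S : ℂ) / (2 * Real.pi * Complex.I)) *
      ((∫ u : ℝ, Complex.exp (Complex.I * ((r : ℝ) + σ ^ 2 / 2) * τ * (u - (w * ω₂) * Complex.I)
            - τ * σ ^ 2 * (u - (w * ω₂) * Complex.I) ^ 2 / 2) / (u - (w * ω₂) * Complex.I))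
        - Real.exp (-r * τ) *
          ∫ u : ℝ, Complex.exp (Complex.I * ((r : ℝ) - σ ^ 2 / 2) * τ * (u - (w * ω₁) * Complex.I)
            - τ * σ ^ 2 * (u - (w * ω₁) * Complex.I) ^ 2 / 2) / (u - (w * ω₁) * Complex.I))
      = (w : ℂ) * S * (stdNormalCDF (w * (r / σ + σ / 2) * Real.sqrt τ)
          - Real.exp (-r * τ) * stdNormalCDF (w * (r / σ - σ / 2) * Real.sqrt τ)) := by
  have hc : 0 < τ * σ ^ 2 := by positivity
  have hkernel : ∀ (ρ : ℝ) (ξ : ℂ), cexp (I * ρ * τ * ξ - τ * σ ^ 2 * ξ ^ 2 / 2) / ξ =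
      gaussDivKernel (ρ * τ) (τ * σ ^ 2) ξ := fun ρ ξ => by
    simp only [gaussDivKernel]; push_cast; ring_nf
  have harg : ∀ ρ : ℝ, w * (ρ * τ) / √(τ * σ ^ 2) = w * (ρ / σ) * √τ := fun ρ => by
    rw [Real.sqrt_mul hτ.le, Real.sqrt_sq hσ.le]
    field_simp
    rw [Real.sq_sqrt hτ.le]
  have hplus : (r : ℂ) + σ ^ 2 / 2 = ((r + σ ^ 2 / 2 : ℝ) : ℂ) := by push_cast; ring
  have hminus : (r : ℂ) - σ ^ 2 / 2 = ((r - σ ^ 2 / 2 : ℝ) : ℂ) := by push_cast; ring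
  simp_rw [hplus, hminus, hkernel, integral_gaussDivKernel_sub_sign_mul_I hw hω₁ hc,
    integral_gaussDivKernel_sub_sign_mul_I hw hω₂ hc, harg]
  have hhalf : σ ^ 2 / 2 / σ = σ / 2 := by field_simp
  rw [add_div, sub_div, hhalf]
  field_simp

/-- Gaussian reduction of the forward-start price. -/
theorem stmt12 (σ r τ S w ω₁ ω₂ : ℝ) (hσ : 0 < σ) (hτ : 0 < τ) (hS : 0 < S)
    (hw : w = 1 ∨ w = -1) (hω₁ : 0 < ω₁) (hω₂ : 0 < ω₂) :
    ((S : ℂ) / (2 * Real.pi * Complex.I)) *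
      ((∫ u : ℝ, Complex.exp (Complex.I * ((r : ℝ) + σ ^ 2 / 2) * τ * (u - (w * ω₂) * Complex.I)
            - τ * σ ^ 2 * (u - (w * ω₂) * Complex.I) ^ 2 / 2) / (u - (w * ω₂) * Complex.I))
        - Real.exp (-r * τ) *
          ∫ u : ℝ, Complex.exp (Complex.I * ((r : ℝ) - σ ^ 2 / 2) * τ * (u - (w * ω₁) * Complex.I)
            - τ * σ ^ 2 * (u - (w * ω₁) * Complex.I) ^ 2 / 2) / (u - (w * ω₁) * Complex.I))
      = (w : ℂ) * S * (stdNormalCDF (w * (r / σ + σ / 2) * Real.sqrt τ)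
          - Real.exp (-r * τ) * stdNormalCDF (w * (r / σ - σ / 2) * Real.sqrt τ)) :=
  stmt12_general σ r τ S w ω₁ ω₂ hσ hτ hw hω₁ hω₂
end

section
/- (Continuous-monitoring limit of the geometric Asian price.) Let λ₋ < 0 < λ₊ and let ψ be an admissible characteristic exponent of order ν ∈ (0,2] and type [λ₋, λ₊]. Let w ∈ {−1, 1} and ω > 0 with −wω ∈ (λ₋, λ₊) and ω ≠ 1, let L ∈ ℝ and τ > 0, and for M ≥ 1 let I_M = ∫_{Im ξ = −wω} (1/(ξ(ξ+i))) exp( iξL − Σ_{j=1}^M (τ/M) ψ(ξ (M − j)/M) ) dξ. Then lim_{M→∞} I_M = ∫_{Im ξ = −wω} (1/(ξ(ξ+i))) exp( iξL − τ ∫_0^1 ψ(ξ(1 − y)) dy ) dξ. -/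
open MeasureTheory Real Complex ProbabilityTheory

structure IsAdmissibleCharExponent (lm lp ν : ℝ) (ψ : ℂ → ℂ) : Prop where
  lm_neg : lm < 0
  lp_pos : 0 < lp
  ν_pos : 0 < ν
  ν_le_two : ν ≤ 2
  continuous : ContinuousOn ψ {ζ : ℂ | lm ≤ ζ.im ∧ ζ.im ≤ lp}
  holomorphic : DifferentiableOn ℂ ψ {ζ : ℂ | lm < ζ.im ∧ ζ.im < lp}
  map_zero : ψ 0 = 0
  growth : ∃ c > 0, ∃ C ≥ 0, ∀ ζ : ℂ, lm ≤ ζ.im → ζ.im ≤ lp →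
    c * |ζ.re| ^ ν - C ≤ (ψ ζ).re

open Filter Topology Set

/-! Reversing the summation index turns the `M`-th exponent into `τ` times the left Riemann sum
of `y ↦ ψ(ξy)` on `[0,1]`, so the integrands converge pointwise. The growth condition bounds
`Re ψ` from below on the strip, which bounds the exponentials uniformly in `M`, and since
`Im ξ = -wω` stays away from `0` and `-1` the prefactor `1/(ξ(ξ+i))` is `O(1/(1+u²))` on the
line. Dominated convergence concludes. -/

section RiemannSum

variable {E : Type*} [NormedAddCommGroup E] [NormedSpace ℝ E]

noncomputable def riemannSum (g : ℝ → E) (M : ℕ) : E :=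
  ∑ k ∈ Finset.range M, (M : ℝ)⁻¹ • g (k / M)

lemma norm_smul_sub_intervalIntegral_le [CompleteSpace E] {g : ℝ → E} {a b ε : ℝ}
    (hab : a ≤ b) (hg : IntervalIntegrable g volume a b)
    (hε : ∀ y ∈ Ioc a b, ‖g a - g y‖ ≤ ε) :
    ‖(b - a) • g a - ∫ y in a..b, g y‖ ≤ ε * (b - a) := by
  rw [← intervalIntegral.integral_const,
    ← intervalIntegral.integral_sub intervalIntegrable_const hg]
  exact (intervalIntegral.norm_integral_le_of_norm_le_const (by rwa [uIoc_of_le hab])).trans_eq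
    (by rw [abs_of_nonneg (sub_nonneg.2 hab)])

theorem tendsto_riemannSum [CompleteSpace E] {g : ℝ → E} (hg : ContinuousOn g (Icc 0 1)) :
    Tendsto (riemannSum g) atTop (𝓝 (∫ y in (0 : ℝ)..1, g y)) := by
  rw [Metric.tendsto_nhds]
  intro ε hε
  obtain ⟨δ, hδ, hgδ⟩ := Metric.uniformContinuousOn_iff.1
    (isCompact_Icc.uniformContinuousOn_of_continuous hg) (ε / 2) (half_pos hε)
  have hmesh : ∀ᶠ M : ℕ in atTop, 0 < M ∧ (M : ℝ)⁻¹ < δ :=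
    (eventually_gt_atTop 0).and
      ((tendsto_inv_atTop_zero.comp tendsto_natCast_atTop_atTop).eventually (gt_mem_nhds hδ))
  filter_upwards [hmesh] with M ⟨hM, hMδ⟩
  have hM' : (0 : ℝ) < M := Nat.cast_pos.2 hM
  set a : ℕ → ℝ := fun k => k / M with ha
  have hstep : ∀ k, a (k + 1) - a k = (M : ℝ)⁻¹ := fun k => by simp only [ha]; push_cast; ring
  have hle (k : ℕ) : a k ≤ a (k + 1) := by linarith [hstep k, inv_pos.2 hM']
  have hsub : ∀ k < M, Icc (a k) (a (k + 1)) ⊆ Icc 0 1 := fun k hk =>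
    Icc_subset_Icc (by positivity) (div_le_one_of_le₀ (by exact_mod_cast hk) hM'.le)
  have hint : ∀ k < M, IntervalIntegrable g volume (a k) (a (k + 1)) := fun k hk =>
    (hg.mono (by rw [uIcc_of_le (hle k)]; exact hsub k hk)).intervalIntegrable
  have hterm : ∀ k ∈ Finset.range M,
      ‖(M : ℝ)⁻¹ • g (a k) - ∫ y in a k..a (k + 1), g y‖ ≤ ε / 2 * (M : ℝ)⁻¹ := by
    intro k hk
    have hk := Finset.mem_range.1 hk
    rw [← hstep k]
    refine norm_smul_sub_intervalIntegral_le (hle k) (hint k hk) fun y hy => ?_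
    rw [← dist_eq_norm]
    refine (hgδ _ (hsub k hk (left_mem_Icc.2 (hle k))) _ (hsub k hk (Ioc_subset_Icc_self hy)) ?_).le
    rw [Real.dist_eq, abs_sub_comm, abs_of_nonneg (by linarith [hy.1])]
    linarith [hy.2, hstep k]
  have hsplit := intervalIntegral.sum_integral_adjacent_intervals hint
  simp only [ha, CharP.cast_eq_zero, zero_div, div_self hM'.ne'] at hsplit
  rw [dist_eq_norm, riemannSum, ← hsplit, ← Finset.sum_sub_distrib]
  calc _ ≤ ∑ _k ∈ Finset.range M, ε / 2 * (M : ℝ)⁻¹ :=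
        (norm_sum_le _ _).trans (Finset.sum_le_sum hterm)
    _ = ε / 2 := by rw [Finset.sum_const, Finset.card_range, nsmul_eq_mul]; field_simp
    _ < ε := half_lt_self hε

end RiemannSum

lemma neg_le_re_riemannSum {g : ℝ → ℂ} {C : ℝ} (hC : 0 ≤ C)
    (hg : ∀ y ∈ Icc (0 : ℝ) 1, -C ≤ (g y).re) (M : ℕ) : -C ≤ (riemannSum g M).re := by
  rcases M.eq_zero_or_pos with rfl | hM
  · simpa [riemannSum] using hC
  have hM' : (0 : ℝ) < M := Nat.cast_pos.2 hM
  calc -C = ∑ _k ∈ Finset.range M, (M : ℝ)⁻¹ * -C := by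
        rw [Finset.sum_const, Finset.card_range, nsmul_eq_mul]; field_simp
    _ ≤ (riemannSum g M).re := by
      simp only [riemannSum, re_sum, Complex.smul_re, smul_eq_mul]
      refine Finset.sum_le_sum fun k hk =>
        mul_le_mul_of_nonneg_left (hg _ ⟨by positivity, ?_⟩) (by positivity)
      exact div_le_one_of_le₀ (by exact_mod_cast (Finset.mem_range.1 hk).le) hM'.le

lemma sum_Icc_reflect_eq_mul_riemannSum (g : ℝ → ℂ) (τ : ℝ) (M : ℕ) :
    ∑ j ∈ Finset.Icc 1 M, ((τ / M : ℝ) : ℂ) * g (((M - j : ℕ) : ℝ) / M) = τ * riemannSum g M := by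
  rw [riemannSum, Finset.mul_sum]
  refine Finset.sum_nbij' (fun j => M - j) (fun k => M - k) ?_ ?_ ?_ ?_ fun j _ => ?_ <;>
    try (intro a ha; simp only [Finset.mem_Icc, Finset.mem_range] at ha ⊢; omega)
  rw [Complex.real_smul]
  push_cast
  ring

lemma natCast_sub_div_mem_Icc (M j : ℕ) : ((M - j : ℕ) : ℝ) / M ∈ Icc (0 : ℝ) 1 :=
  ⟨by positivity, div_le_one_of_le₀ (by exact_mod_cast Nat.sub_le M j) M.cast_nonneg⟩

lemma mul_ofReal_mem_preimage_im_Icc {lm lp : ℝ} (hlm : lm ≤ 0) (hlp : 0 ≤ lp) {ξ : ℂ}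
    (hξ : ξ ∈ im ⁻¹' Icc lm lp) {t : ℝ} (ht : t ∈ Icc (0 : ℝ) 1) : ξ * t ∈ im ⁻¹' Icc lm lp := by
  simpa [mul_comm t] using (convex_Icc lm lp).smul_mem_of_zero_mem ⟨hlm, hlp⟩ hξ ht

lemma IsAdmissibleCharExponent.exists_neg_le_re {lm lp ν : ℝ} {ψ : ℂ → ℂ}
    (hψ : IsAdmissibleCharExponent lm lp ν ψ) :
    ∃ C ≥ 0, ∀ ζ ∈ im ⁻¹' Icc lm lp, -C ≤ (ψ ζ).re := by
  obtain ⟨c, hc, C, hC, hgrowth⟩ := hψ.growth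
  refine ⟨C, hC, fun ζ hζ => ?_⟩
  have : 0 ≤ c * |ζ.re| ^ ν := by positivity
  linarith [hgrowth ζ hζ.1 hζ.2]

lemma exists_norm_one_div_mul_add_I_le {b : ℝ} (hb0 : b ≠ 0) (hb1 : b ≠ 1) :
    ∃ K, ∀ u : ℝ, ‖1 / (((u : ℂ) - b * I) * (((u : ℂ) - b * I) + I))‖ ≤ K * (1 + u ^ 2)⁻¹ := by
  set k := min 1 (|b| * |1 - b|)
  have hk : 0 < k := lt_min one_pos (mul_pos (abs_pos.2 hb0) (abs_pos.2 (sub_ne_zero.2 hb1.symm)))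
  refine ⟨2 / k, fun u => ?_⟩
  set z : ℂ := u - b * I
  -- `‖z‖ * ‖z + I‖` dominates both `u²` and `|b| * |1 - b|`, hence `k * (1 + u²) / 2`
  have hre : |u| * |u| ≤ ‖z‖ * ‖z + I‖ :=
    mul_le_mul (by simpa [z] using abs_re_le_norm z) (by simpa [z] using abs_re_le_norm (z + I))
      (abs_nonneg _) (norm_nonneg _)
  have him : |b| * |1 - b| ≤ ‖z‖ * ‖z + I‖ :=
    mul_le_mul (by simpa [z] using abs_im_le_norm z)
      (by simpa [z, neg_add_eq_sub] using abs_im_le_norm (z + I)) (abs_nonneg _) (norm_nonneg _)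
  rw [norm_div, norm_one, norm_mul, one_div]
  calc (‖z‖ * ‖z + I‖)⁻¹ ≤ (k * (1 + u ^ 2) / 2)⁻¹ := by
        refine inv_anti₀ (by positivity) ?_
        nlinarith [min_le_left 1 (|b| * |1 - b|), min_le_right 1 (|b| * |1 - b|),
          abs_mul_abs_self u]
    _ = 2 / k * (1 + u ^ 2)⁻¹ := by field_simp

theorem tendsto_integral_line_of_re_ge {b L K : ℝ} (hb0 : b ≠ 0) (hb1 : b ≠ 1) {Φ : ℕ → ℂ → ℂ}
    {Φ₀ : ℂ → ℂ} (hcont : ∀ M, Continuous fun u : ℝ => Φ M (u - b * I))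
    (hre : ∀ M (u : ℝ), -K ≤ (Φ M (u - b * I)).re)
    (hlim : ∀ u : ℝ, Tendsto (fun M => Φ M (u - b * I)) atTop (𝓝 (Φ₀ (u - b * I)))) :
    Tendsto (fun M => ∫ u : ℝ, 1 / (((u : ℂ) - b * I) * (((u : ℂ) - b * I) + I)) *
        exp (I * ((u : ℂ) - b * I) * L - Φ M (u - b * I))) atTop
      (𝓝 (∫ u : ℝ, 1 / (((u : ℂ) - b * I) * (((u : ℂ) - b * I) + I)) *
        exp (I * ((u : ℂ) - b * I) * L - Φ₀ (u - b * I)))) := by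
  obtain ⟨K₀, hK₀⟩ := exists_norm_one_div_mul_add_I_le hb0 hb1
  refine tendsto_integral_of_dominated_convergence (fun u => K₀ * (1 + u ^ 2)⁻¹ * rexp (b * L + K))
    (fun M => ?_) ((integrable_inv_one_add_sq.const_mul K₀).mul_const _)
    (fun M => ae_of_all _ fun u => ?_) (ae_of_all _ fun u => ?_)
  · refine Measurable.aestronglyMeasurable (Measurable.mul (by fun_prop) ?_)
    exact ((Continuous.fun_sub (by fun_prop) (hcont M)).cexp).measurable
  · rw [norm_mul, norm_exp]
    refine mul_le_mul (hK₀ u) (Real.exp_le_exp.2 ?_) (exp_pos _).le ((norm_nonneg _).trans (hK₀ u))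
    have := hre M u
    simp only [sub_re, mul_re, I_re, I_im, ofReal_re, ofReal_im, sub_im, mul_im]
    linarith
  · exact tendsto_const_nhds.mul ((tendsto_const_nhds.sub (hlim u)).cexp)

/-- Continuous-monitoring limit of the geometric Asian price integral. -/
theorem stmt15 (lm lp ν : ℝ) (ψ : ℂ → ℂ) (hψ : IsAdmissibleCharExponent lm lp ν ψ)
    (w ω : ℝ) (hw : w = 1 ∨ w = -1) (hω : 0 < ω)
    (hstrip : lm < -(w * ω) ∧ -(w * ω) < lp) (hω1 : ω ≠ 1)
    (L τ : ℝ) (hτ : 0 < τ) :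
    Filter.Tendsto
      (fun M : ℕ =>
        ∫ u : ℝ,
          (1 / (((u : ℂ) - (w * ω : ℝ) * Complex.I) *
              (((u : ℂ) - (w * ω : ℝ) * Complex.I) + Complex.I))) *
          Complex.exp (Complex.I * ((u : ℂ) - (w * ω : ℝ) * Complex.I) * (L : ℂ)
            - ∑ j ∈ Finset.Icc 1 M, ((τ / (M : ℝ) : ℝ) : ℂ) *
                ψ (((u : ℂ) - (w * ω : ℝ) * Complex.I) *
                  ((((M - j : ℕ) : ℝ) / (M : ℝ) : ℝ) : ℂ))))
      Filter.atTop
      (nhds (∫ u : ℝ,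
        (1 / (((u : ℂ) - (w * ω : ℝ) * Complex.I) *
            (((u : ℂ) - (w * ω : ℝ) * Complex.I) + Complex.I))) *
        Complex.exp (Complex.I * ((u : ℂ) - (w * ω : ℝ) * Complex.I) * (L : ℂ)
          - (τ : ℂ) * ∫ y in (0 : ℝ)..1,
              ψ (((u : ℂ) - (w * ω : ℝ) * Complex.I) * (((1 - y : ℝ) : ℝ) : ℂ))))) := by
  obtain ⟨C, hC0, hC⟩ := hψ.exists_neg_le_re
  have hb0 : w * ω ≠ 0 := mul_ne_zero (by rcases hw with rfl | rfl <;> norm_num) hω.ne'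
  have hb1 : w * ω ≠ 1 := by
    rcases hw with rfl | rfl
    · simpa using hω1
    · linarith
  have hmem (u : ℝ) {t : ℝ} (ht : t ∈ Icc (0 : ℝ) 1) :
      ((u : ℂ) - (w * ω : ℝ) * I) * t ∈ im ⁻¹' Icc lm lp :=
    mul_ofReal_mem_preimage_im_Icc hψ.lm_neg.le hψ.lp_pos.le
      (by simpa using ⟨hstrip.1.le, hstrip.2.le⟩) ht
  have hsum (M : ℕ) (u : ℝ) := sum_Icc_reflect_eq_mul_riemannSum
    (fun y : ℝ => ψ (((u : ℂ) - (w * ω : ℝ) * I) * y)) τ M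
  refine tendsto_integral_line_of_re_ge hb0 hb1 (K := C * τ)
    (Φ := fun M ξ => ∑ j ∈ Finset.Icc 1 M, ((τ / (M : ℝ) : ℝ) : ℂ) *
      ψ (ξ * ((((M - j : ℕ) : ℝ) / (M : ℝ) : ℝ) : ℂ)))
    (Φ₀ := fun ξ => τ * ∫ y in (0 : ℝ)..1, ψ (ξ * (((1 - y : ℝ) : ℝ) : ℂ)))
    (fun M => ?_) (fun M u => ?_) fun u => ?_
  · exact continuous_finsetSum _ fun j _ => continuous_const.mul
      (hψ.continuous.comp_continuous (by fun_prop) fun u => hmem u (natCast_sub_div_mem_Icc M j))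
  · rw [hsum M u, re_ofReal_mul]
    have := neg_le_re_riemannSum hC0 (fun y hy => hC _ (hmem u hy)) M
    nlinarith
  · have hreflect := intervalIntegral.integral_comp_sub_left
      (fun y : ℝ => ψ (((u : ℂ) - (w * ω : ℝ) * I) * y)) 1 (a := 0) (b := 1)
    simp only [sub_self, sub_zero] at hreflect
    simp_rw [hsum _ u, hreflect]
    exact (tendsto_riemannSum (hψ.continuous.comp (by fun_prop) fun y => hmem u)).const_mul _
end
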